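/- Let M = (ℕ, <, P₁, …, Pₙ) be a labelled linear ordering over the natural numbers and let H ⊆ ℕ be uniformly homogeneous for M. Then H is not MSO-definable in M. -/

import Mathlib

namespace Paper

/-! ## Syntax and semantics of monadic second-order logic over labelled linear orders

A labelled linear ordering `M = (A, <, P₁, …, Pₙ)` is represented by a type `A`,
a binary relation `r : A → A → Prop` (the order) and `P : Fin n → Set A`
(the unary predicates). -/

/-- MSO formulas over the signature `{<, P₀, …, P_{n-1}}`.  First-order
variables and second-order (set) variables are both indexed by `ℕ`. -/
inductive MSO (n : ℕ) : Type
  | lt (i j : ℕ) : MSO n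
  | pred (k : Fin n) (i : ℕ) : MSO n
  | mem (i j : ℕ) : MSO n
  | not (φ : MSO n) : MSO n
  | and (φ ψ : MSO n) : MSO n
  | ex1 (i : ℕ) (φ : MSO n) : MSO n
  | ex2 (j : ℕ) (φ : MSO n) : MSO n

namespace MSO

variable {n : ℕ}

/-- Satisfaction of an MSO formula in the structure `(A, r, P)` under the
first-order assignment `v` and the second-order assignment `V`. -/
def Sat {A : Type} (r : A → A → Prop) (P : Fin n → Set A)
    (v : ℕ → A) (V : ℕ → Set A) : MSO n → Prop
  | lt i j => r (v i) (v j)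
  | pred k i => v i ∈ P k
  | mem i j => v i ∈ V j
  | not φ => ¬ Sat r P v V φ
  | and φ ψ => Sat r P v V φ ∧ Sat r P v V ψ
  | ex1 i φ => ∃ a : A, Sat r P (Function.update v i a) V φ
  | ex2 j φ => ∃ S : Set A, Sat r P v (Function.update V j S) φ

/-- Quantifier depth of an MSO formula. -/
def qd : MSO n → ℕ
  | lt _ _ => 0
  | pred _ _ => 0
  | mem _ _ => 0
  | not φ => qd φ
  | and φ ψ => max (qd φ) (qd ψ)
  | ex1 _ φ => qd φ + 1
  | ex2 _ φ => qd φ + 1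

/-- Free first-order variables of an MSO formula. -/
def fv1 : MSO n → Finset ℕ
  | lt i j => {i, j}
  | pred _ i => {i}
  | mem i _ => {i}
  | not φ => fv1 φ
  | and φ ψ => fv1 φ ∪ fv1 ψ
  | ex1 i φ => fv1 φ \ {i}
  | ex2 _ φ => fv1 φ

/-- Free second-order variables of an MSO formula. -/
def fv2 : MSO n → Finset ℕ
  | lt _ _ => ∅
  | pred _ _ => ∅
  | mem _ j => {j}
  | not φ => fv2 φ
  | and φ ψ => fv2 φ ∪ fv2 ψ
  | ex1 _ φ => fv2 φ
  | ex2 j φ => fv2 φ \ {j}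

/-- A sentence is a formula with no free variables. -/
def IsSentence (φ : MSO n) : Prop := fv1 φ = ∅ ∧ fv2 φ = ∅

/-- A sentence `φ` is true in the structure `(A, r, P)`. -/
def TrueIn {A : Type} (r : A → A → Prop) (P : Fin n → Set A) (φ : MSO n) : Prop :=
  ∀ (v : ℕ → A) (V : ℕ → Set A), Sat r P v V φ

/-- `Q ⊆ A` is MSO-definable in `(A, r, P)`: there is a formula `φ(x)` whose only
free variable is the first-order variable `0` defining `Q`. -/
def Definable {A : Type} (r : A → A → Prop) (P : Fin n → Set A) (Q : Set A) : Prop :=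
  ∃ φ : MSO n, fv1 φ ⊆ {0} ∧ fv2 φ = ∅ ∧
    ∀ a : A, a ∈ Q ↔ ∀ (v : ℕ → A) (V : ℕ → Set A), Sat r P (Function.update v 0 a) V φ

/-- A Gödel numbering of MSO formulas. -/
def encode : MSO n → ℕ
  | lt i j => Nat.pair 0 (Nat.pair i j)
  | pred k i => Nat.pair 1 (Nat.pair k i)
  | mem i j => Nat.pair 2 (Nat.pair i j)
  | not φ => Nat.pair 3 (encode φ)
  | and φ ψ => Nat.pair 4 (Nat.pair (encode φ) (encode ψ))
  | ex1 i φ => Nat.pair 5 (Nat.pair i (encode φ))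
  | ex2 j φ => Nat.pair 6 (Nat.pair j (encode φ))

/-- The MSO theory of the structure `(A, r, P)`, as a set of Gödel codes of the true
sentences. -/
def TheoryCodes {A : Type} (r : A → A → Prop) (P : Fin n → Set A) : Set ℕ :=
  {c | ∃ φ : MSO n, IsSentence φ ∧ encode φ = c ∧ TrueIn r P φ}

/-- Two structures have the same `k`-type: they satisfy the same MSO sentences of
quantifier depth `≤ k`. -/
def EquivType (k : ℕ) {A B : Type} (r : A → A → Prop) (P : Fin n → Set A)
    (s : B → B → Prop) (Q : Fin n → Set B) : Prop :=
  ∀ φ : MSO n, IsSentence φ → qd φ ≤ k → (TrueIn r P φ ↔ TrueIn s Q φ)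

/-- The `k`-type of a structure, as the set of Gödel codes of the true sentences
of quantifier depth `≤ k`. -/
def TypeSet (k : ℕ) {A : Type} (r : A → A → Prop) (P : Fin n → Set A) : Set ℕ :=
  {c | ∃ φ : MSO n, IsSentence φ ∧ qd φ ≤ k ∧ encode φ = c ∧ TrueIn r P φ}

end MSO

/-- The order relation of the substructure with domain `S`. -/
def subRel {A : Type} (r : A → A → Prop) (S : Set A) : S → S → Prop :=
  fun x y => r x y

/-- The predicates of the substructure with domain `S`. -/
def subPred {A : Type} {n : ℕ} (P : Fin n → Set A) (S : Set A) : Fin n → Set S :=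
  fun k => {x : S | (x : A) ∈ P k}

/-! ## Relative computability -/

/-- Partial recursiveness relative to an oracle `O` (Kleene-style, following
the definition of `Nat.Partrec`, with an extra base case for the oracle). -/
inductive RecursiveIn (O : ℕ →. ℕ) : (ℕ →. ℕ) → Prop
  | zero : RecursiveIn O (pure 0)
  | succ : RecursiveIn O ↑Nat.succ
  | left : RecursiveIn O ↑fun n : ℕ => n.unpair.1
  | right : RecursiveIn O ↑fun n : ℕ => n.unpair.2
  | oracle : RecursiveIn O O
  | pair {f g} : RecursiveIn O f → RecursiveIn O g →
      RecursiveIn O fun n => Nat.pair <$> f n <*> g n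
  | comp {f g} : RecursiveIn O f → RecursiveIn O g →
      RecursiveIn O fun n => g n >>= f
  | prec {f g} : RecursiveIn O f → RecursiveIn O g →
      RecursiveIn O (Nat.unpaired fun a m =>
        m.rec (f a) fun y IH => do let i ← IH; g (Nat.pair a (Nat.pair y i)))
  | rfind {f} : RecursiveIn O f →
      RecursiveIn O fun a => Nat.rfind fun m => (fun x => x = 0) <$> f (Nat.pair a m)

/-- The characteristic (partial) function of a set of naturals. -/
noncomputable def chi (S : Set ℕ) : ℕ →. ℕ :=
  fun m => Part.some (S.indicator (fun _ => 1) m)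

/-- `S` is recursive in (Turing reducible to) `T`. -/
def TuringRed (S T : Set ℕ) : Prop := RecursiveIn (chi T) (chi S)

/-- The (recursive) join of a finite family of sets of naturals. -/
def finJoin {m : ℕ} (P : Fin m → Set ℕ) : Set ℕ :=
  {c | ∃ i : Fin m, ∃ x : ℕ, c = Nat.pair i x ∧ x ∈ P i}

/-- The (recursive) join of two sets of naturals. -/
def setJoin (S T : Set ℕ) : Set ℕ :=
  {c | (∃ a, c = 2 * a ∧ a ∈ S) ∨ (∃ a, c = 2 * a + 1 ∧ a ∈ T)}

/-- A set of naturals is decidable (computable). -/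
def DecidableSet (S : Set ℕ) : Prop := ComputablePred (· ∈ S)

/-! ## Homogeneous sets for labelled orderings of the naturals -/

/-- `H = {h 0 < h 1 < ⋯}` is `k`-homogeneous for `(ℕ, <, P)`:
all substructures `M_{[h i, h j)}`, `i < j`, have the same `k`-type. -/
def KHomogeneous {n : ℕ} (P : Fin n → Set ℕ) (h : ℕ → ℕ) (k : ℕ) : Prop :=
  ∀ i j i' j' : ℕ, i < j → i' < j' →
    MSO.EquivType k
      (subRel (· < ·) (Set.Ico (h i) (h j))) (subPred P (Set.Ico (h i) (h j)))
      (subRel (· < ·) (Set.Ico (h i') (h j'))) (subPred P (Set.Ico (h i') (h j')))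

/-- `H = {h 0 < h 1 < ⋯}` is uniformly homogeneous for `(ℕ, <, P)`:
for each `k`, the set `{h k < h (k+1) < ⋯}` is `k`-homogeneous. -/
def UniformlyHomogeneous {n : ℕ} (P : Fin n → Set ℕ) (h : ℕ → ℕ) : Prop :=
  StrictMono h ∧
  ∀ k : ℕ, KHomogeneous P (fun i => h (k + i)) k

/-! ## ℤ-words -/

/-- The finite word `u` occurs at position `i` in the `ℤ`-word `w`. -/
def OccursAt {σ : Type} (w : ℤ → σ) (u : List σ) (i : ℤ) : Prop :=
  ∀ k : Fin u.length, w (i + (k : ℕ)) = u.get k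

/-- The finite word `u` occurs in the `ℤ`-word `w`. -/
def OccursIn {σ : Type} (w : ℤ → σ) (u : List σ) : Prop :=
  ∃ i : ℤ, OccursAt w u i

/-- `u` occurs in every prefix of `w`. -/
def InEveryPrefix {σ : Type} (w : ℤ → σ) (u : List σ) : Prop :=
  ∀ n : ℤ, ∃ i : ℤ, i + u.length ≤ n ∧ OccursAt w u i

/-- `u` occurs in every suffix of `w`. -/
def InEverySuffix {σ : Type} (w : ℤ → σ) (u : List σ) : Prop :=
  ∀ n : ℤ, ∃ i : ℤ, n ≤ i ∧ OccursAt w u i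

/-- A `ℤ`-word `w` is recurrent: for every regular language `X`, either no element
of `X` occurs in `w`, or every prefix and every suffix of `w` contains an
occurrence of some element of `X`. -/
def Recurrent {σ : Type} (w : ℤ → σ) : Prop :=
  ∀ X : Language σ, X.IsRegular →
    (∀ u ∈ X, ¬ OccursIn w u) ∨
    (∀ n : ℤ, (∃ u ∈ X, ∃ i : ℤ, i + u.length ≤ n ∧ OccursAt w u i) ∧
              (∃ u ∈ X, ∃ i : ℤ, n ≤ i ∧ OccursAt w u i))

/-- The `ℤ`-word `w(M)` over the alphabet `{0,1}ⁿ` associated with the labelled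
linear ordering `M = (ℤ, <, P₁, …, Pₙ)`. -/
def wordOf {n : ℕ} (P : Fin n → Set ℤ) : ℤ → (Fin n → Prop) :=
  fun i k => i ∈ P k

/-!
Let `φ(x)` of quantifier depth `d` define `H = {h 0 < h 1 < ⋯}`, put `K = d + 3` and
`g i = h (K + i)`. Cut `ℕ` at `0, g 0, g 1, g 2, …` and, merging two blocks, at
`0, g 0, g 2, g 3, …`. By `K`-homogeneity corresponding blocks of the two decompositions have the
same `K`-type. Hintikka formulas turn this into equality of Hintikka types of depth `K - 1`, and
the composition lemma for the ordered sum of the blocks then gives the point `g 1`, which lies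
inside the merged block `[g 0, g 2)`, a twin `b` in `[g 0, g 1)` satisfying the same formulas of
depth `d + 1`. As `g 1` is not the least point of its block, neither is `b`; so `g 0 < b < g 1`,
whence `b ∉ H` although `φ(b)` holds.
-/

namespace MSO

variable {n : ℕ} {A B : Type} {r : A → A → Prop} {P : Fin n → Set A} {s : B → B → Prop}
  {Q : Fin n → Set B}

theorem sat_congr (φ : MSO n) {v w : ℕ → A} {V W : ℕ → Set A} (hv : ∀ i ∈ fv1 φ, v i = w i)
    (hV : ∀ j ∈ fv2 φ, V j = W j) : Sat r P v V φ ↔ Sat r P w W φ := by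
  induction φ generalizing v w V W with
  | lt i j => simp_all [Sat, fv1]
  | pred c i => simp_all [Sat, fv1]
  | mem i j => simp_all [Sat, fv1, fv2]
  | not φ ih => exact not_congr (ih hv hV)
  | and φ ψ ihφ ihψ =>
    exact and_congr
      (ihφ (fun i hi => hv i (by simp [fv1, hi])) (fun j hj => hV j (by simp [fv2, hj])))
      (ihψ (fun i hi => hv i (by simp [fv1, hi])) (fun j hj => hV j (by simp [fv2, hj])))
  | ex1 i φ ih =>
    refine exists_congr fun a => ih (fun i' hi' => ?_) hV
    by_cases h : i' = i
    · simp [h]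
    · simp [Function.update_of_ne h, hv i' (by simp [fv1, hi', h])]
  | ex2 j φ ih =>
    refine exists_congr fun S => ih hv fun j' hj' => ?_
    by_cases h : j' = j
    · simp [h]
    · simp [Function.update_of_ne h, hV j' (by simp [fv2, hj', h])]

theorem sat_iff_of_isSentence {φ : MSO n} (hφ : IsSentence φ) (v w : ℕ → A) (V W : ℕ → Set A) :
    Sat r P v V φ ↔ Sat r P w W φ :=
  sat_congr φ (by simp [hφ.1]) (by simp [hφ.2])

theorem forall_sat_update_iff {φ : MSO n} (hφ1 : fv1 φ ⊆ {0}) (hφ2 : fv2 φ = ∅) (a : A) :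
    (∀ (v : ℕ → A) (V : ℕ → Set A), Sat r P (Function.update v 0 a) V φ) ↔
      Sat r P (fun _ => a) (fun _ => ∅) φ := by
  refine ⟨fun h => by simpa using h (fun _ => a) (fun _ => ∅),
    fun h v V => (sat_congr φ ?_ ?_).mp h⟩
  · intro i hi
    obtain rfl := Finset.mem_singleton.mp (hφ1 hi)
    simp
  · simp [hφ2]

/-! ## Hintikka types -/

/-- The order relations, labels and memberships among `p` elements and `q` sets. -/
abbrev Diagram (n p q : ℕ) : Type :=
  (Fin p → Fin p → Prop) × (Fin p → Fin n → Prop) × (Fin p → Fin q → Prop)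

/-- Hintikka types of depth `k` of `p` elements and `q` sets. -/
def HType (n : ℕ) : ℕ → ℕ → ℕ → Type
  | 0, p, q => Diagram n p q
  | k + 1, p, q => Diagram n p q × Set (HType n k (p + 1) q) × Set (HType n k p (q + 1))

instance HType.finite : ∀ k p q : ℕ, Finite (HType n k p q)
  | 0, _, _ => by unfold HType; infer_instance
  | k + 1, p, q => by
    have := HType.finite k (p + 1) q
    have := HType.finite k p (q + 1)
    unfold HType; infer_instance

def diagram (r : A → A → Prop) (P : Fin n → Set A) (p q : ℕ) (v : ℕ → A) (V : ℕ → Set A) :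
    Diagram n p q :=
  (fun i j => r (v i) (v j), fun i c => v i ∈ P c, fun i j => v i ∈ V j)

/-- Only the slots `v 0, …, v (p - 1)` and `V 0, …, V (q - 1)` count; a quantifier fills slot `p`
or slot `q`. -/
def htype (r : A → A → Prop) (P : Fin n → Set A) :
    (k p q : ℕ) → (ℕ → A) → (ℕ → Set A) → HType n k p q
  | 0, p, q, v, V => diagram r P p q v V
  | k + 1, p, q, v, V =>
    (diagram r P p q v V,
      Set.range fun a => htype r P k (p + 1) q (Function.update v p a) V,
      Set.range fun S => htype r P k p (q + 1) v (Function.update V q S))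

theorem diagram_eq_iff {p q : ℕ} {v : ℕ → A} {V : ℕ → Set A} {t : Diagram n p q} :
    diagram r P p q v V = t ↔ (∀ i j : Fin p, r (v i) (v j) ↔ t.1 i j) ∧
      (∀ (i : Fin p) (c : Fin n), v i ∈ P c ↔ t.2.1 i c) ∧
      ∀ (i : Fin p) (j : Fin q), v i ∈ V j ↔ t.2.2 i j := by
  simp only [diagram, Prod.ext_iff, funext_iff, eq_iff_iff]

theorem diagram_eq_of_htype_eq {k p q : ℕ} {v : ℕ → A} {V : ℕ → Set A} {w : ℕ → B}
    {W : ℕ → Set B} (h : htype r P k p q v V = htype s Q k p q w W) :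
    diagram r P p q v V = diagram s Q p q w W := by
  cases k with
  | zero => exact h
  | succ k => exact congrArg Prod.fst h

theorem forall_lt_update_eq_update {α : Type} {p : ℕ} {v v' : ℕ → α} (h : ∀ i < p, v i = v' i)
    (a : α) : ∀ i < p + 1, Function.update v p a i = Function.update v' p a i := by
  intro i hi
  rcases (Nat.lt_succ_iff_lt_or_eq.mp hi) with hi | rfl
  · simp [Function.update_of_ne hi.ne, h i hi]
  · simp

theorem diagram_congr {p q : ℕ} {v v' : ℕ → A} {V V' : ℕ → Set A} (hv : ∀ i < p, v i = v' i)
    (hV : ∀ j < q, V j = V' j) : diagram r P p q v V = diagram r P p q v' V' := by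
  simp [diagram, hv, hV]

theorem htype_congr {k p q : ℕ} {v v' : ℕ → A} {V V' : ℕ → Set A} (hv : ∀ i < p, v i = v' i)
    (hV : ∀ j < q, V j = V' j) : htype r P k p q v V = htype r P k p q v' V' := by
  induction k generalizing p q v v' V V' with
  | zero => exact diagram_congr hv hV
  | succ k ih =>
    simp only [htype]
    congr 1
    · exact diagram_congr hv hV
    congr 1 <;> congr 1 <;> funext
    · exact ih (forall_lt_update_eq_update hv _) hV
    · exact ih hv (forall_lt_update_eq_update hV _)

theorem exists_htype_update_elem_eq {k p q : ℕ} {v : ℕ → A} {V : ℕ → Set A} {w : ℕ → B}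
    {W : ℕ → Set B} (h : htype r P (k + 1) p q v V = htype s Q (k + 1) p q w W) (a : A) :
    ∃ b, htype r P k (p + 1) q (Function.update v p a) V =
      htype s Q k (p + 1) q (Function.update w p b) W := by
  have hrange : (Set.range fun a => htype r P k (p + 1) q (Function.update v p a) V) =
      Set.range fun b => htype s Q k (p + 1) q (Function.update w p b) W :=
    congrArg (fun t : HType n (k + 1) p q => t.2.1) h
  obtain ⟨b, hb⟩ := hrange ▸ Set.mem_range_self a
  exact ⟨b, hb.symm⟩

theorem exists_htype_update_set_eq {k p q : ℕ} {v : ℕ → A} {V : ℕ → Set A} {w : ℕ → B}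
    {W : ℕ → Set B} (h : htype r P (k + 1) p q v V = htype s Q (k + 1) p q w W) (S : Set A) :
    ∃ T, htype r P k p (q + 1) v (Function.update V q S) =
      htype s Q k p (q + 1) w (Function.update W q T) := by
  have hrange : (Set.range fun S => htype r P k p (q + 1) v (Function.update V q S)) =
      Set.range fun T => htype s Q k p (q + 1) w (Function.update W q T) :=
    congrArg (fun t : HType n (k + 1) p q => t.2.2) h
  obtain ⟨T, hT⟩ := hrange ▸ Set.mem_range_self S
  exact ⟨T, hT.symm⟩

/-! ## Hintikka formulas -/

/-- Valid also in the empty structure. -/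
def top : MSO n := .not (.ex1 0 (.and (.lt 0 0) (.not (.lt 0 0))))

theorem sat_top {v : ℕ → A} {V : ℕ → Set A} : Sat r P v V (top : MSO n) := by
  simp [top, Sat]

def iConj {α : Type} (l : List α) (f : α → MSO n) : MSO n :=
  l.foldr (fun a φ => .and (f a) φ) top

def iDisj {α : Type} (l : List α) (f : α → MSO n) : MSO n :=
  .not (iConj l fun a => .not (f a))

section iConj

variable {α : Type} {l : List α} {f : α → MSO n}

theorem sat_iConj {v : ℕ → A} {V : ℕ → Set A} :
    Sat r P v V (iConj l f) ↔ ∀ a ∈ l, Sat r P v V (f a) := by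
  induction l with
  | nil => simp [iConj, sat_top]
  | cons a l ih => simp_all [iConj, Sat]

theorem sat_iDisj {v : ℕ → A} {V : ℕ → Set A} :
    Sat r P v V (iDisj l f) ↔ ∃ a ∈ l, Sat r P v V (f a) := by
  simp [iDisj, Sat, sat_iConj]

theorem qd_iConj_le {m : ℕ} (hm : 1 ≤ m) (h : ∀ a ∈ l, qd (f a) ≤ m) : qd (iConj l f) ≤ m := by
  induction l with
  | nil => exact hm
  | cons a l ih => simp_all [iConj, qd]

theorem fv1_iConj_subset {t : Finset ℕ} (h : ∀ a ∈ l, fv1 (f a) ⊆ t) : fv1 (iConj l f) ⊆ t := by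
  induction l with
  | nil => simp [iConj, top, fv1]
  | cons a l ih => simp_all [iConj, fv1, Finset.union_subset_iff]

theorem fv2_iConj_subset {t : Finset ℕ} (h : ∀ a ∈ l, fv2 (f a) ⊆ t) : fv2 (iConj l f) ⊆ t := by
  induction l with
  | nil => simp [iConj, top, fv2]
  | cons a l ih => simp_all [iConj, fv2, Finset.union_subset_iff]

end iConj

open Classical in
noncomputable def lit (c : Prop) (φ : MSO n) : MSO n := if c then φ else .not φ

section lit

variable {c : Prop} {φ : MSO n}

theorem sat_lit {v : ℕ → A} {V : ℕ → Set A} : Sat r P v V (lit c φ) ↔ (Sat r P v V φ ↔ c) := by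
  by_cases h : c <;> simp [lit, h, Sat]

theorem qd_lit : qd (lit c φ) = qd φ := by
  by_cases h : c <;> simp [lit, h, qd]

theorem fv1_lit : fv1 (lit c φ) = fv1 φ := by
  by_cases h : c <;> simp [lit, h, fv1]

theorem fv2_lit : fv2 (lit c φ) = fv2 φ := by
  by_cases h : c <;> simp [lit, h, fv2]

end lit

noncomputable def diagramFormula {p q : ℕ} (t : Diagram n p q) : MSO n :=
  iConj (List.finRange p) fun i =>
    .and (iConj (List.finRange p) fun j => lit (t.1 i j) (.lt i j))
      (.and (iConj (List.finRange n) fun c => lit (t.2.1 i c) (.pred c i))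
        (iConj (List.finRange q) fun j => lit (t.2.2 i j) (.mem i j)))

section diagramFormula

variable {p q : ℕ} {t : Diagram n p q}

theorem sat_diagramFormula {v : ℕ → A} {V : ℕ → Set A} :
    Sat r P v V (diagramFormula t) ↔ diagram r P p q v V = t := by
  simp [diagramFormula, sat_iConj, sat_lit, Sat, diagram_eq_iff, forall_and]

theorem qd_diagramFormula_le : qd (diagramFormula t) ≤ 1 := by
  refine qd_iConj_le le_rfl fun i _ => ?_
  simp only [qd, max_le_iff]
  exact ⟨qd_iConj_le le_rfl fun j _ => by simp [qd_lit, qd],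
    qd_iConj_le le_rfl fun c _ => by simp [qd_lit, qd],
    qd_iConj_le le_rfl fun j _ => by simp [qd_lit, qd]⟩

theorem fv1_diagramFormula_subset : fv1 (diagramFormula t) ⊆ Finset.range p := by
  refine fv1_iConj_subset fun i _ => ?_
  simp only [fv1, Finset.union_subset_iff]
  refine ⟨fv1_iConj_subset fun j _ => ?_, fv1_iConj_subset fun c _ => ?_,
    fv1_iConj_subset fun j _ => ?_⟩ <;> simp [fv1_lit, fv1, Finset.insert_subset_iff]

theorem fv2_diagramFormula_subset : fv2 (diagramFormula t) ⊆ Finset.range q := by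
  refine fv2_iConj_subset fun i _ => ?_
  simp only [fv2, Finset.union_subset_iff]
  refine ⟨fv2_iConj_subset fun j _ => ?_, fv2_iConj_subset fun c _ => ?_,
    fv2_iConj_subset fun j _ => ?_⟩ <;> simp [fv2_lit, fv2]

end diagramFormula

noncomputable def hintikka : (k p q : ℕ) → HType n k p q → MSO n
  | 0, _, _, t => diagramFormula t
  | k + 1, p, q, t =>
    .and (diagramFormula t.1)
      (.and
        (.and (iConj t.2.1.toFinite.toFinset.toList fun u => .ex1 p (hintikka k (p + 1) q u))
          (.not (.ex1 p (.not (iDisj t.2.1.toFinite.toFinset.toList (hintikka k (p + 1) q))))))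
        (.and (iConj t.2.2.toFinite.toFinset.toList fun u => .ex2 q (hintikka k p (q + 1) u))
          (.not (.ex2 q (.not (iDisj t.2.2.toFinite.toFinset.toList (hintikka k p (q + 1))))))))

theorem sat_hintikka {k p q : ℕ} {v : ℕ → A} {V : ℕ → Set A} {t : HType n k p q} :
    Sat r P v V (hintikka k p q t) ↔ htype r P k p q v V = t := by
  induction k generalizing p q v V with
  | zero => exact sat_diagramFormula
  | succ k ih =>
    obtain ⟨t₀, T₁, T₂⟩ := t
    change _ ↔ ((_, _, _) : Diagram n p q × Set (HType n k (p + 1) q) × Set (HType n k p (q + 1)))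
      = (t₀, T₁, T₂)
    simp only [hintikka, Sat, sat_diagramFormula, sat_iConj, sat_iDisj, ih, not_exists, not_not,
      Set.Finite.mem_toFinset, Finset.mem_toList, exists_eq_right', Prod.mk.injEq,
      Set.range_eq_iff]
    tauto

theorem qd_hintikka_le {k p q : ℕ} (t : HType n k p q) : qd (hintikka k p q t) ≤ k + 1 := by
  induction k generalizing p q with
  | zero => exact qd_diagramFormula_le
  | succ k ih =>
    simp only [hintikka, iDisj, qd, max_le_iff, add_le_add_iff_right]
    refine ⟨qd_diagramFormula_le.trans (by omega), ⟨qd_iConj_le (by omega) fun u _ => ?_,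
      qd_iConj_le (by omega) fun u _ => ih u⟩, qd_iConj_le (by omega) fun u _ => ?_,
      qd_iConj_le (by omega) fun u _ => ih u⟩ <;> simpa [qd] using ih u

theorem sdiff_singleton_subset_range {s : Finset ℕ} {p : ℕ} (h : s ⊆ Finset.range (p + 1)) :
    s \ {p} ⊆ Finset.range p := by
  rwa [Finset.sdiff_singleton_eq_erase, ← Finset.subset_insert_iff, ← Finset.range_add_one]

theorem fv1_hintikka_subset {k p q : ℕ} (t : HType n k p q) :
    fv1 (hintikka k p q t) ⊆ Finset.range p := by
  induction k generalizing p q with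
  | zero => exact fv1_diagramFormula_subset
  | succ k ih =>
    simp only [hintikka, iDisj, fv1, Finset.union_subset_iff]
    exact ⟨fv1_diagramFormula_subset,
      ⟨fv1_iConj_subset fun u _ => sdiff_singleton_subset_range (ih u),
        sdiff_singleton_subset_range (fv1_iConj_subset fun u _ => ih u)⟩,
      fv1_iConj_subset fun u _ => ih u, fv1_iConj_subset fun u _ => ih u⟩

theorem fv2_hintikka_subset {k p q : ℕ} (t : HType n k p q) :
    fv2 (hintikka k p q t) ⊆ Finset.range q := by
  induction k generalizing p q with
  | zero => exact fv2_diagramFormula_subset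
  | succ k ih =>
    simp only [hintikka, iDisj, fv2, Finset.union_subset_iff]
    exact ⟨fv2_diagramFormula_subset,
      ⟨fv2_iConj_subset fun u _ => ih u, fv2_iConj_subset fun u _ => ih u⟩,
      fv2_iConj_subset fun u _ => sdiff_singleton_subset_range (ih u),
      sdiff_singleton_subset_range (fv2_iConj_subset fun u _ => ih u)⟩

theorem isSentence_hintikka {k : ℕ} (t : HType n k 0 0) : IsSentence (hintikka k 0 0 t) :=
  ⟨Finset.subset_empty.mp (fv1_hintikka_subset t), Finset.subset_empty.mp (fv2_hintikka_subset t)⟩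

theorem htype_eq_of_equivType {K k : ℕ} (h : EquivType K r P s Q) (hk : k + 1 ≤ K) (v : ℕ → A)
    (V : ℕ → Set A) (w : ℕ → B) (W : ℕ → Set B) :
    htype r P k 0 0 v V = htype s Q k 0 0 w W := by
  have hA : TrueIn r P (hintikka k 0 0 (htype r P k 0 0 v V)) := fun v' V' =>
    (sat_iff_of_isSentence (isSentence_hintikka _) v v' V V').mp (sat_hintikka.mpr rfl)
  exact (sat_hintikka.mp
    ((h _ (isSentence_hintikka _) ((qd_hintikka_le _).trans hk)).mp hA w W)).symm

theorem exists_htype_const_eq {k q : ℕ} {v : ℕ → A} {V : ℕ → Set A} {w : ℕ → B}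
    {W : ℕ → Set B} (h : htype r P (k + 1) 0 q v V = htype s Q (k + 1) 0 q w W) (a : A) :
    ∃ b, htype r P k 1 q (fun _ => a) V = htype s Q k 1 q (fun _ => b) W := by
  obtain ⟨b, hb⟩ := exists_htype_update_elem_eq h a
  have hconst : ∀ {C : Type} (u : ℕ → C) (c : C), ∀ i < 1, c = Function.update u 0 c i := by
    simp
  exact ⟨b, (htype_congr (hconst v a) fun _ _ => rfl).trans
    (hb.trans (htype_congr (fun i hi => (hconst w b i hi).symm) fun _ _ => rfl))⟩

theorem exists_rel_of_htype_eq {k q : ℕ} {a a' : A} {V : ℕ → Set A} {b : B} {W : ℕ → Set B}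
    (h : htype r P (k + 1) 1 q (fun _ => a) V = htype s Q (k + 1) 1 q (fun _ => b) W)
    (ha : r a' a) : ∃ b', s b' b := by
  obtain ⟨b', hb'⟩ := exists_htype_update_elem_eq h a'
  have := (diagram_eq_iff.mp (diagram_eq_of_htype_eq hb')).1 1 0
  exact ⟨b', by simpa [diagram] using this.mp (by simpa using ha)⟩

end MSO

/-! ## Composition over blocks of `ℕ` -/

section Blocks

variable {c : ℕ → ℕ}

abbrev Block (c : ℕ → ℕ) (m : ℕ) : Set ℕ := Set.Ico (c m) (c (m + 1))

theorem exists_mem_block (hc : StrictMono c) (hc0 : c 0 = 0) (a : ℕ) : ∃ m, a ∈ Block c m := by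
  have hcover := iUnion_Ico_map_succ_eq_Ici (fun m => hc.monotone (Nat.zero_le m))
    hc.not_bddAbove_range_of_wellFoundedLT
  simpa using hcover.ge (show c ⊥ ≤ a by simp [hc0])

theorem lt_of_mem_block_of_lt (hc : StrictMono c) {m m' a b : ℕ} (ha : a ∈ Block c m)
    (hb : b ∈ Block c m') (hm : m < m') : a < b :=
  ha.2.trans_le ((hc.monotone hm).trans hb.1)

theorem eq_of_mem_block (hc : StrictMono c) {m m' a : ℕ} (ha : a ∈ Block c m)
    (ha' : a ∈ Block c m') : m = m' := by
  by_contra hne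
  rcases Nat.lt_or_gt_of_ne hne with h | h
  · exact lt_irrefl a (lt_of_mem_block_of_lt hc ha ha' h)
  · exact lt_irrefl a (lt_of_mem_block_of_lt hc ha' ha h)

theorem left_mem_block (hc : StrictMono c) (m : ℕ) : c m ∈ Block c m :=
  Set.left_mem_Ico.mpr (hc m.lt_succ_self)

def glue (c : ℕ → ℕ) (U : ∀ m, Set (Block c m)) : Set ℕ := ⋃ m, Subtype.val '' U m

theorem coe_mem_glue_iff (hc : StrictMono c) {U : ∀ m, Set (Block c m)} {m : ℕ} (a : Block c m) :
    (a : ℕ) ∈ glue c U ↔ a ∈ U m := by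
  refine ⟨fun ha => ?_, fun ha => Set.mem_iUnion.mpr ⟨m, a, ha, rfl⟩⟩
  obtain ⟨_, b, hb, hba⟩ := Set.mem_iUnion.mp ha
  obtain rfl := eq_of_mem_block hc b.2 (hba ▸ a.2)
  rwa [← Subtype.ext hba]

theorem glue_preimage_val (hc : StrictMono c) (hc0 : c 0 = 0) (S : Set ℕ) :
    glue c (fun _ => Subtype.val ⁻¹' S) = S := by
  ext a
  obtain ⟨m, ha⟩ := exists_mem_block hc hc0 a
  exact coe_mem_glue_iff hc ⟨a, ha⟩

end Blocks

section Composition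

open MSO

variable {n : ℕ} (P : Fin n → Set ℕ)

abbrev blockType (c : ℕ → ℕ) (m k p q : ℕ) (v : ℕ → Block c m) (V : ℕ → Set (Block c m)) :
    HType n k p q :=
  htype (subRel (· < ·) (Block c m)) (subPred P (Block c m)) k p q v V

variable {P} {c d : ℕ → ℕ} {k p q : ℕ} {vl : ∀ m, ℕ → Block c m} {Vl : ∀ m, ℕ → Set (Block c m)}
  {wl : ∀ m, ℕ → Block d m} {Wl : ∀ m, ℕ → Set (Block d m)}

theorem coe_lt_coe_iff_of_blockType_eq (hc : StrictMono c) (hd : StrictMono d)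
    (hT : ∀ m, blockType P c m k p q (vl m) (Vl m) = blockType P d m k p q (wl m) (Wl m))
    {i j : ℕ} (hi : i < p) (hj : j < p) (mi mj : ℕ) :
    (vl mi i : ℕ) < vl mj j ↔ (wl mi i : ℕ) < wl mj j := by
  rcases lt_trichotomy mi mj with h | rfl | h
  · exact iff_of_true (lt_of_mem_block_of_lt hc (vl mi i).2 (vl mj j).2 h)
      (lt_of_mem_block_of_lt hd (wl mi i).2 (wl mj j).2 h)
  · exact (diagram_eq_iff.mp (diagram_eq_of_htype_eq (hT mi))).1 ⟨i, hi⟩ ⟨j, hj⟩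
  · exact iff_of_false (lt_of_mem_block_of_lt hc (vl mj j).2 (vl mi i).2 h).not_gt
      (lt_of_mem_block_of_lt hd (wl mj j).2 (wl mi i).2 h).not_gt

def ElemsGlued (p : ℕ) (vl : ∀ m, ℕ → Block c m) (wl : ∀ m, ℕ → Block d m) (x y : ℕ → ℕ)
    (s : Finset ℕ) : Prop :=
  ∀ i ∈ s, ∃ j < p, ∃ m, x i = vl m j ∧ y i = wl m j

def SetsGlued (q : ℕ) (Vl : ∀ m, ℕ → Set (Block c m)) (Wl : ∀ m, ℕ → Set (Block d m))
    (X Y : ℕ → Set ℕ) (s : Finset ℕ) : Prop :=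
  ∀ i ∈ s, ∃ j < q, X i = glue c (Vl · j) ∧ Y i = glue d (Wl · j)

section Glued

variable {x y : ℕ → ℕ} {X Y : ℕ → Set ℕ} {s t : Finset ℕ} {i : ℕ}

theorem ElemsGlued.symm (h : ElemsGlued p vl wl x y s) : ElemsGlued p wl vl y x s :=
  fun i hi => (h i hi).imp fun _ => .imp_right (.imp fun _ => And.symm)

theorem ElemsGlued.mono (h : ElemsGlued p vl wl x y s) (hts : t ⊆ s) :
    ElemsGlued p vl wl x y t :=
  fun i hi => h i (hts hi)

theorem ElemsGlued.update (h : ElemsGlued p vl wl x y (s \ {i})) (α : ∀ m, Block c m)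
    (β : ∀ m, Block d m) (m₀ : ℕ) :
    ElemsGlued (p + 1) (fun m => Function.update (vl m) p (α m))
      (fun m => Function.update (wl m) p (β m))
      (Function.update x i (α m₀)) (Function.update y i (β m₀)) s := by
  intro i' hi'
  by_cases hii : i' = i
  · subst hii
    exact ⟨p, p.lt_succ_self, m₀, by simp, by simp⟩
  · obtain ⟨j, hj, m, hxj, hyj⟩ := h i' (by simp [hi', hii])
    exact ⟨j, hj.trans p.lt_succ_self, m,
      by simp [Function.update_of_ne hii, Function.update_of_ne hj.ne, hxj],
      by simp [Function.update_of_ne hii, Function.update_of_ne hj.ne, hyj]⟩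

theorem SetsGlued.symm (h : SetsGlued q Vl Wl X Y s) : SetsGlued q Wl Vl Y X s :=
  fun i hi => (h i hi).imp fun _ => .imp_right And.symm

theorem SetsGlued.mono (h : SetsGlued q Vl Wl X Y s) (hts : t ⊆ s) : SetsGlued q Vl Wl X Y t :=
  fun i hi => h i (hts hi)

theorem SetsGlued.update (h : SetsGlued q Vl Wl X Y (s \ {i})) (U : ∀ m, Set (Block c m))
    (U' : ∀ m, Set (Block d m)) :
    SetsGlued (q + 1) (fun m => Function.update (Vl m) q (U m))
      (fun m => Function.update (Wl m) q (U' m))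
      (Function.update X i (glue c U)) (Function.update Y i (glue d U')) s := by
  intro i' hi'
  by_cases hii : i' = i
  · subst hii
    exact ⟨q, q.lt_succ_self, by simp, by simp⟩
  · obtain ⟨j, hj, hXj, hYj⟩ := h i' (by simp [hi', hii])
    exact ⟨j, hj.trans q.lt_succ_self,
      by simp [Function.update_of_ne hii, Function.update_of_ne hj.ne, hXj],
      by simp [Function.update_of_ne hii, Function.update_of_ne hj.ne, hYj]⟩

end Glued

/-- The composition lemma for the ordered sum of the blocks. Only one implication is proved, but for
all pairs of cut sequences at once, so that negation is handled by swapping the two sides. -/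
theorem sat_of_blockType_eq (φ : MSO n) (hφ : qd φ ≤ k) (hc : StrictMono c) (hc0 : c 0 = 0)
    (hd : StrictMono d) (hd0 : d 0 = 0)
    (hT : ∀ m, blockType P c m k p q (vl m) (Vl m) = blockType P d m k p q (wl m) (Wl m))
    {x y : ℕ → ℕ} {X Y : ℕ → Set ℕ} (hx : ElemsGlued p vl wl x y (fv1 φ))
    (hX : SetsGlued q Vl Wl X Y (fv2 φ)) (hsat : Sat (· < ·) P x X φ) :
    Sat (· < ·) P y Y φ := by
  induction φ generalizing k p q c d x y X Y with
  | lt i j =>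
    obtain ⟨si, hsi, mi, hxi, hyi⟩ := hx i (by simp [fv1])
    obtain ⟨sj, hsj, mj, hxj, hyj⟩ := hx j (by simp [fv1])
    simp only [Sat, hxi, hxj, hyi, hyj] at hsat ⊢
    exact (coe_lt_coe_iff_of_blockType_eq hc hd hT hsi hsj mi mj).mp hsat
  | pred l i =>
    obtain ⟨si, hsi, mi, hxi, hyi⟩ := hx i (by simp [fv1])
    simp only [Sat, hxi, hyi] at hsat ⊢
    exact ((diagram_eq_iff.mp (diagram_eq_of_htype_eq (hT mi))).2.1 ⟨si, hsi⟩ l).mp hsat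
  | mem i j =>
    obtain ⟨si, hsi, mi, hxi, hyi⟩ := hx i (by simp [fv1])
    obtain ⟨sj, hsj, hXj, hYj⟩ := hX j (by simp [fv2])
    simp only [Sat, hxi, hyi, hXj, hYj, coe_mem_glue_iff hc, coe_mem_glue_iff hd] at hsat ⊢
    exact ((diagram_eq_iff.mp (diagram_eq_of_htype_eq (hT mi))).2.2 ⟨si, hsi⟩ ⟨sj, hsj⟩).mp hsat
  | not φ ih =>
    exact fun hy => hsat (ih hφ hd hd0 hc hc0 (fun m => (hT m).symm) hx.symm hX.symm hy)
  | and φ ψ ihφ ihψ =>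
    exact ⟨ihφ (le_of_max_le_left hφ) hc hc0 hd hd0 hT (hx.mono Finset.subset_union_left)
        (hX.mono Finset.subset_union_left) hsat.1,
      ihψ (le_of_max_le_right hφ) hc hc0 hd hd0 hT (hx.mono Finset.subset_union_right)
        (hX.mono Finset.subset_union_right) hsat.2⟩
  | ex1 i φ ih =>
    obtain ⟨k, rfl⟩ : ∃ k', k = k' + 1 := ⟨k - 1, by simp only [qd] at hφ; omega⟩
    obtain ⟨a, ha⟩ := hsat
    obtain ⟨m₀, hm₀⟩ := exists_mem_block hc hc0 a
    let α : ∀ m, Block c m := Function.update (fun m => ⟨c m, left_mem_block hc m⟩) m₀ ⟨a, hm₀⟩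
    have hα : (α m₀ : ℕ) = a := by simp [α]
    choose β hβ using fun m => exists_htype_update_elem_eq (hT m) (α m)
    refine ⟨β m₀, ih (by simpa [qd] using hφ) hc hc0 hd hd0 hβ (hx.update α β m₀) hX ?_⟩
    rwa [hα]
  | ex2 j φ ih =>
    obtain ⟨k, rfl⟩ : ∃ k', k = k' + 1 := ⟨k - 1, by simp only [qd] at hφ; omega⟩
    obtain ⟨S, hS⟩ := hsat
    choose T hT' using fun m => exists_htype_update_set_eq (hT m) (Subtype.val ⁻¹' S)
    rw [← glue_preimage_val hc hc0 S] at hS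
    exact ⟨glue d T, ih (by simpa [qd] using hφ) hc hc0 hd hd0 hT' hx (hX.update _ T) hS⟩

theorem exists_sat_iff_of_equivType_blocks (hc : StrictMono c) (hc0 : c 0 = 0)
    (hd : StrictMono d) (hd0 : d 0 = 0) {k : ℕ}
    (hequiv : ∀ m, EquivType (k + 2) (subRel (· < ·) (Block c m)) (subPred P (Block c m))
      (subRel (· < ·) (Block d m)) (subPred P (Block d m)))
    {φ : MSO n} (hφ : qd φ ≤ k) (hφ2 : fv2 φ = ∅) {m₀ : ℕ} (a : Block c m₀) :
    ∃ b : Block d m₀,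
      blockType P c m₀ k 1 0 (fun _ => a) (fun _ => ∅) =
        blockType P d m₀ k 1 0 (fun _ => b) (fun _ => ∅) ∧
      (Sat (· < ·) P (fun _ => (a : ℕ)) (fun _ => ∅) φ ↔
        Sat (· < ·) P (fun _ => (b : ℕ)) (fun _ => ∅) φ) := by
  let α : ∀ m, Block c m := Function.update (fun m => ⟨c m, left_mem_block hc m⟩) m₀ a
  have hα : α m₀ = a := Function.update_self ..
  choose β hβ using fun m => exists_htype_const_eq
    (htype_eq_of_equivType (hequiv m) le_rfl (fun _ => α m) (fun _ => ∅)
      (fun _ => ⟨d m, left_mem_block hd m⟩) (fun _ => ∅)) (α m)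
  refine ⟨β m₀, hα ▸ hβ m₀, ⟨sat_of_blockType_eq φ hφ hc hc0 hd hd0 hβ ?_ ?_,
    sat_of_blockType_eq φ hφ hd hd0 hc hc0 (fun m => (hβ m).symm) ?_ ?_⟩⟩
  · exact fun _ _ => ⟨0, one_pos, m₀, by rw [hα], rfl⟩
  · simp [SetsGlued, hφ2]
  · exact fun _ _ => ⟨0, one_pos, m₀, rfl, by rw [hα]⟩
  · simp [SetsGlued, hφ2]

end Composition

section Cuts

variable {g : ℕ → ℕ}

def cutSeq (g : ℕ → ℕ) : ℕ → ℕ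
  | 0 => 0
  | m + 1 => g m

def mergedCutSeq (g : ℕ → ℕ) : ℕ → ℕ
  | 0 => 0
  | 1 => g 0
  | m + 2 => g (m + 2)

theorem strictMono_cutSeq (hg : StrictMono g) (hg0 : 0 < g 0) : StrictMono (cutSeq g) :=
  strictMono_nat_of_lt_succ fun
    | 0 => hg0
    | m + 1 => hg m.lt_succ_self

theorem strictMono_mergedCutSeq (hg : StrictMono g) (hg0 : 0 < g 0) :
    StrictMono (mergedCutSeq g) :=
  strictMono_nat_of_lt_succ fun
    | 0 => hg0
    | 1 => hg two_pos
    | m + 2 => hg (m + 2).lt_succ_self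

theorem equivType_blocks_of_kHomogeneous {n K : ℕ} {P : Fin n → Set ℕ} (hg : KHomogeneous P g K) :
    ∀ m, MSO.EquivType K
      (subRel (· < ·) (Block (mergedCutSeq g) m)) (subPred P (Block (mergedCutSeq g) m))
      (subRel (· < ·) (Block (cutSeq g) m)) (subPred P (Block (cutSeq g) m))
  | 0 => fun _ _ _ => Iff.rfl
  | 1 => hg 0 2 0 1 two_pos one_pos
  | m + 2 => hg (m + 2) (m + 3) (m + 1) (m + 2) (by omega) (by omega)

end Cuts

end Paper

open Paper

/-- If `H = {h 0 < h 1 < ⋯}` is uniformly homogeneous for the labelled linear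
ordering `M = (ℕ, <, P₁, …, Pₙ)`, then `H` is not MSO-definable in `M`. -/
theorem stmt_9 {n : ℕ} (P : Fin n → Set ℕ) (h : ℕ → ℕ)
    (hH : UniformlyHomogeneous P h) :
    ¬ MSO.Definable (fun x y : ℕ => x < y) P (Set.range h) := by
  rintro ⟨φ, hφ1, hφ2, hdef⟩
  -- the twin must agree with `g 1` to depth `qd φ + 1` to be non-minimal too; two more levels
  -- are used up by `exists_sat_iff_of_equivType_blocks`
  set K := MSO.qd φ + 3
  set g : ℕ → ℕ := fun i => h (K + i)
  have hg : StrictMono g := hH.1.comp (strictMono_id.const_add K)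
  have hg0 : 0 < g 0 := (Nat.zero_le _).trans_lt (hH.1 (by omega : 0 < K + 0))
  obtain ⟨b, hbtype, hsat⟩ := exists_sat_iff_of_equivType_blocks
    (strictMono_mergedCutSeq hg hg0) rfl (strictMono_cutSeq hg hg0) rfl
    (equivType_blocks_of_kHomogeneous (hH.2 K)) (k := MSO.qd φ + 1) (by omega) hφ2
    (m₀ := 1) ⟨g 1, (hg one_pos).le, hg one_lt_two⟩
  obtain ⟨b', hb'⟩ := MSO.exists_rel_of_htype_eq hbtype
    (a' := (⟨g 0, le_rfl, hg two_pos⟩ : Block (mergedCutSeq g) 1)) (hg one_pos)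
  have hb : (b : ℕ) ∉ Set.range h := by
    rintro ⟨t, ht⟩
    have h₁ : h (K + 0) < h t := ht ▸ b'.2.1.trans_lt hb'
    have h₂ : h t < h (K + 1) := ht ▸ b.2.2
    rw [hH.1.lt_iff_lt] at h₁ h₂
    omega
  refine hb ((hdef b).mpr ((MSO.forall_sat_update_iff hφ1 hφ2 _).mpr (hsat.mp ?_)))
  exact (MSO.forall_sat_update_iff hφ1 hφ2 _).mp ((hdef (g 1)).mp ⟨K + 1, rfl⟩)
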